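/- For every probability measure μ on bid vectors (possibly correlated) and every reserve vector r, the expected eager revenue with reserves r is at most twice the supremum over all reserve vectors r' of the expected lazy revenue: E_μ[RevE(·, r)] ≤ 2 · sup_{r'} E_μ[RevL(·, r')]. In particular the optimal expected eager revenue is at most twice the optimal expected lazy revenue. -/

import Mathlib

open MeasureTheory Finset
open scoped Classical ENNReal

noncomputable def lazyWinner {n : ℕ} (b : Fin (n + 1) → ℝ) : Fin (n + 1) :=
  (Finset.univ.filter fun i => ∀ j, b j ≤ b i).min' (by
    obtain ⟨i, -, hi⟩ := Finset.exists_max_image Finset.univ b ⟨0, Finset.mem_univ 0⟩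
    exact ⟨i, Finset.mem_filter.mpr ⟨Finset.mem_univ i, fun j => hi j (Finset.mem_univ j)⟩⟩)

noncomputable def secondMax {n : ℕ} (b : Fin (n + 1) → ℝ) : ℝ :=
  (Finset.univ.erase (lazyWinner b)).fold max 0 b

/-- Revenue of the second price auction with lazy reserves. -/
noncomputable def lazyRev {n : ℕ} (b r : Fin (n + 1) → ℝ) : ℝ :=
  if r (lazyWinner b) ≤ b (lazyWinner b) then max (r (lazyWinner b)) (secondMax b) else 0

/-- The least-index bidder among those meeting their reserve attaining the highest bid. -/
noncomputable def eagerWinner {n : ℕ} (b r : Fin (n + 1) → ℝ)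
    (hS : (Finset.univ.filter fun i => r i ≤ b i).Nonempty) : Fin (n + 1) :=
  ((Finset.univ.filter fun i => r i ≤ b i).filter
      fun i => ∀ k ∈ Finset.univ.filter (fun i => r i ≤ b i), b k ≤ b i).min' (by
    obtain ⟨i, hi, hmax⟩ := Finset.exists_max_image _ b hS
    exact ⟨i, Finset.mem_filter.mpr ⟨hi, hmax⟩⟩)

/-- Revenue of the second price auction with eager reserves. -/
noncomputable def eagerRev {n : ℕ} (b r : Fin (n + 1) → ℝ) : ℝ :=
  if hS : (Finset.univ.filter fun i => r i ≤ b i).Nonempty then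
    max (r (eagerWinner b r hS))
      (((Finset.univ.filter fun i => r i ≤ b i).erase (eagerWinner b r hS)).fold max 0 b)
  else 0

/-!
For every bid vector the eager revenue is at most the larger of the lazy revenues with the same
reserves and with zero reserves. If the highest bidder `w` meets his reserve, he also wins the
eager auction, whose competing bids are a subset of the lazy ones, so the eager revenue is at most
the lazy revenue with the same reserves. Otherwise `w` is excluded from the eager auction, so the
eager winner's reserve and every competing eager bid are bounded by the second-highest bid, which
is the lazy revenue with zero reserves. Integrating, `E[RevE(r)] ≤ E[RevL(r)] + E[RevL(0)]`, and
each term is at most the optimal lazy revenue.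
-/

namespace Finset

variable {ι α : Type*} [LinearOrder α]

lemma le_fold_max_of_mem {s : Finset ι} {f : ι → α} {i : ι} (a : α) (hi : i ∈ s) :
    f i ≤ s.fold max a f :=
  (le_fold_max _).2 (Or.inr ⟨i, hi, le_rfl⟩)

lemma fold_max_mono {s t : Finset ι} (h : s ⊆ t) (a : α) (f : ι → α) :
    s.fold max a f ≤ t.fold max a f :=
  (fold_max_le _).2 ⟨(le_fold_max _).2 (Or.inl le_rfl), fun _ hx => le_fold_max_of_mem a (h hx)⟩

lemma measurable_fold_max [MeasurableSpace α] [TopologicalSpace α] [OrderClosedTopology α]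
    [SecondCountableTopology α] [OpensMeasurableSpace α] (s : Finset ι) (a : α) :
    Measurable fun f : ι → α => s.fold max a f := by
  induction s using Finset.induction_on with
  | empty => exact measurable_const
  | insert i s hi ih => simpa only [fold_insert hi] using (measurable_pi_apply i).max ih

end Finset

variable {n : ℕ}

lemma lazyWinner_spec (b : Fin (n + 1) → ℝ) (j : Fin (n + 1)) : b j ≤ b (lazyWinner b) := by
  unfold lazyWinner
  generalize_proofs hne
  exact (mem_filter.1 (min'_mem _ hne)).2 j

lemma lazyWinner_le {b : Fin (n + 1) → ℝ} {i : Fin (n + 1)} (hi : ∀ j, b j ≤ b i) :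
    lazyWinner b ≤ i :=
  min'_le _ _ (mem_filter.2 ⟨mem_univ _, hi⟩)

lemma lazyWinner_eq_iff {b : Fin (n + 1) → ℝ} {w : Fin (n + 1)} :
    lazyWinner b = w ↔ (∀ j, b j ≤ b w) ∧ ∀ i, (∀ j, b j ≤ b i) → w ≤ i := by
  constructor
  · rintro rfl
    exact ⟨lazyWinner_spec b, fun _ => lazyWinner_le⟩
  · rintro ⟨hw, hmin⟩
    exact le_antisymm (lazyWinner_le hw) (hmin _ (lazyWinner_spec b))

lemma measurable_lazyWinner : Measurable (lazyWinner : (Fin (n + 1) → ℝ) → Fin (n + 1)) := by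
  refine measurable_to_countable' fun w => ?_
  simp only [Set.preimage, Set.mem_singleton_iff, lazyWinner_eq_iff]
  exact measurableSet_setOfPred.2 (by fun_prop)

lemma measurable_lazyRev (r : Fin (n + 1) → ℝ) : Measurable fun b => lazyRev b r := by
  let F : (Fin (n + 1) → ℝ) × Fin (n + 1) → ℝ := fun p =>
    if r p.2 ≤ p.1 p.2 then max (r p.2) ((univ.erase p.2).fold max 0 p.1) else 0
  have hF : Measurable F := measurable_from_prod_countable_left fun w => by
    show Measurable fun b : Fin (n + 1) → ℝ =>
      if r w ≤ b w then max (r w) ((univ.erase w).fold max 0 b) else 0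
    exact Measurable.ite (measurableSet_le measurable_const (measurable_pi_apply w))
      (measurable_const.max (measurable_fold_max (univ.erase w) (0 : ℝ))) measurable_const
  exact hF.comp (measurable_id.prodMk measurable_lazyWinner)

section eagerWinner

variable (b r : Fin (n + 1) → ℝ) (hS : (univ.filter fun i => r i ≤ b i).Nonempty)

lemma eagerWinner_spec : r (eagerWinner b r hS) ≤ b (eagerWinner b r hS) ∧
    ∀ k, r k ≤ b k → b k ≤ b (eagerWinner b r hS) := by
  unfold eagerWinner
  generalize_proofs hne
  obtain ⟨hmem, hmax⟩ := mem_filter.1 (min'_mem _ hne)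
  exact ⟨(mem_filter.1 hmem).2, fun k hk => hmax k (mem_filter.2 ⟨mem_univ k, hk⟩)⟩

lemma eagerWinner_le {i : Fin (n + 1)} (hi : r i ≤ b i) (hmax : ∀ k, r k ≤ b k → b k ≤ b i) :
    eagerWinner b r hS ≤ i :=
  min'_le _ _ (mem_filter.2
    ⟨mem_filter.2 ⟨mem_univ i, hi⟩, fun k hk => hmax k (by simpa using hk)⟩)

lemma eagerWinner_eq_lazyWinner (hw : r (lazyWinner b) ≤ b (lazyWinner b)) :
    eagerWinner b r hS = lazyWinner b := by
  have hbj : b (eagerWinner b r hS) = b (lazyWinner b) :=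
    le_antisymm (lazyWinner_spec b _) ((eagerWinner_spec b r hS).2 _ hw)
  exact le_antisymm (eagerWinner_le b r hS hw fun k _ => lazyWinner_spec b k)
    (lazyWinner_le fun k => hbj ▸ lazyWinner_spec b k)

end eagerWinner

lemma eagerRev_le_lazyRev {b r : Fin (n + 1) → ℝ} (hw : r (lazyWinner b) ≤ b (lazyWinner b)) :
    eagerRev b r ≤ lazyRev b r := by
  have hS : (univ.filter fun i => r i ≤ b i).Nonempty := ⟨_, mem_filter.2 ⟨mem_univ _, hw⟩⟩
  rw [eagerRev, dif_pos hS, eagerWinner_eq_lazyWinner b r hS hw, lazyRev, if_pos hw]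
  exact max_le_max le_rfl (fold_max_mono (erase_subset_erase _ (subset_univ _)) _ _)

lemma eagerRev_le_secondMax {b r : Fin (n + 1) → ℝ} (hw : b (lazyWinner b) < r (lazyWinner b)) :
    eagerRev b r ≤ secondMax b := by
  have hS_sub : univ.filter (fun i => r i ≤ b i) ⊆ univ.erase (lazyWinner b) := fun i hi =>
    mem_erase.2 ⟨fun h => hw.not_ge (h ▸ (mem_filter.1 hi).2), mem_univ i⟩
  rw [eagerRev]
  split_ifs with hS
  · have hj := (eagerWinner_spec b r hS).1
    exact max_le (hj.trans (le_fold_max_of_mem _ (hS_sub (mem_filter.2 ⟨mem_univ _, hj⟩))))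
      (fold_max_mono ((erase_subset _ _).trans hS_sub) _ _)
  · exact (le_fold_max _).2 (Or.inl le_rfl)

lemma secondMax_le_lazyRev_zero {b : Fin (n + 1) → ℝ} (hb : 0 ≤ b (lazyWinner b)) :
    secondMax b ≤ lazyRev b 0 := by
  rw [lazyRev, Pi.zero_apply, if_pos hb]
  exact le_max_right _ _

lemma eagerRev_le_max_lazyRev {b : Fin (n + 1) → ℝ} (hb : ∀ i, 0 ≤ b i) (r : Fin (n + 1) → ℝ) :
    eagerRev b r ≤ max (lazyRev b r) (lazyRev b 0) := by
  rcases le_or_gt (r (lazyWinner b)) (b (lazyWinner b)) with hw | hw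
  · exact (eagerRev_le_lazyRev hw).trans (le_max_left _ _)
  · exact ((eagerRev_le_secondMax hw).trans (secondMax_le_lazyRev_zero (hb _))).trans
      (le_max_right _ _)

lemma lintegral_eagerRev_le (μ : Measure (Fin (n + 1) → ℝ)) (hb : ∀ᵐ b ∂μ, ∀ i, 0 ≤ b i)
    (r : Fin (n + 1) → ℝ) :
    ∫⁻ b, ENNReal.ofReal (eagerRev b r) ∂μ ≤
      ∫⁻ b, ENNReal.ofReal (lazyRev b r) ∂μ + ∫⁻ b, ENNReal.ofReal (lazyRev b 0) ∂μ := by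
  rw [← lintegral_add_left (measurable_lazyRev r).ennreal_ofReal]
  refine lintegral_mono_ae (hb.mono fun b hb => ?_)
  calc ENNReal.ofReal (eagerRev b r)
      ≤ ENNReal.ofReal (max (lazyRev b r) (lazyRev b 0)) :=
        ENNReal.ofReal_le_ofReal (eagerRev_le_max_lazyRev hb r)
    _ ≤ ENNReal.ofReal (lazyRev b r) + ENNReal.ofReal (lazyRev b 0) := by
        rw [ENNReal.ofReal_max]
        exact max_le le_self_add le_add_self

theorem eager_le_two_opt_lazy_general {n : ℕ} (μ : Measure (Fin (n + 1) → ℝ))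
    (hb : ∀ᵐ b ∂μ, ∀ i, 0 ≤ b i)
    (r : Fin (n + 1) → ℝ) (hr : ∀ i, 0 ≤ r i) :
    ∫⁻ b, ENNReal.ofReal (eagerRev b r) ∂μ ≤
      2 * ⨆ (r' : Fin (n + 1) → ℝ) (_ : ∀ i, 0 ≤ r' i),
        ∫⁻ b, ENNReal.ofReal (lazyRev b r') ∂μ := by
  set optLazy := ⨆ (r' : Fin (n + 1) → ℝ) (_ : ∀ i, 0 ≤ r' i),
    ∫⁻ b, ENNReal.ofReal (lazyRev b r') ∂μ
  calc ∫⁻ b, ENNReal.ofReal (eagerRev b r) ∂μ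
      ≤ ∫⁻ b, ENNReal.ofReal (lazyRev b r) ∂μ + ∫⁻ b, ENNReal.ofReal (lazyRev b 0) ∂μ :=
        lintegral_eagerRev_le μ hb r
    _ ≤ optLazy + optLazy :=
        add_le_add (le_iSup₂_of_le r hr le_rfl) (le_iSup₂_of_le 0 (fun _ => le_rfl) le_rfl)
    _ = 2 * optLazy := (two_mul _).symm

theorem eager_le_two_opt_lazy {n : ℕ} (μ : Measure (Fin (n + 1) → ℝ))
    [IsProbabilityMeasure μ] (hb : ∀ᵐ b ∂μ, ∀ i, 0 ≤ b i)
    (r : Fin (n + 1) → ℝ) (hr : ∀ i, 0 ≤ r i) :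
    ∫⁻ b, ENNReal.ofReal (eagerRev b r) ∂μ ≤
      2 * ⨆ (r' : Fin (n + 1) → ℝ) (_ : ∀ i, 0 ≤ r' i),
        ∫⁻ b, ENNReal.ofReal (lazyRev b r') ∂μ :=
  eager_le_two_opt_lazy_general μ hb r hr
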